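/- arXiv:2102.11900 — 5 statements merged into one kernel-verified Lean document; each statement's English description precedes it below -/
import Mathlib

section
/- Let Ω be a finite set and let G ≤ Sym(Ω) be an elusive permutation group of fixity f. If G contains a non-trivial normal p-subgroup for a prime p, then p ≤ f. -/
variable {Ω : Type*} [Fintype Ω]

/-- The number of fixed points of a permutation. -/
noncomputable def fixedCount (g : Equiv.Perm Ω) : ℕ := Nat.card {x : Ω // g x = x}

/-- `G` has fixity `f`: every non-trivial element fixes at most `f` points,
and some non-trivial element fixes exactly `f` points. -/
def HasFixity (G : Subgroup (Equiv.Perm Ω)) (f : ℕ) : Prop :=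
  (∀ g ∈ G, g ≠ 1 → fixedCount g ≤ f) ∧ ∃ g ∈ G, g ≠ 1 ∧ fixedCount g = f

/-- `G` is transitive on `Ω`. -/
def IsTransitive (G : Subgroup (Equiv.Perm Ω)) : Prop :=
  ∀ α β : Ω, ∃ g ∈ G, g α = β

/-- `G` is elusive: transitive, and it has no fixed-point-free element of prime order. -/
def IsElusive (G : Subgroup (Equiv.Perm Ω)) : Prop :=
  IsTransitive G ∧ ¬ ∃ g ∈ G, (orderOf g).Prime ∧ ∀ x : Ω, g x ≠ x

/-! A non-trivial normal `p`-subgroup `N` of the transitive group `G` cannot fix a point: its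
fixed-point set is `G`-invariant, hence all of `Ω`, which would make `N` trivial. So `p ∣ |Ω|`.
Now take `g ∈ N` of order `p`. Since `G` is elusive, `g` fixes some point, while its non-trivial
cycles all have length `p`, so `fix(g) ≡ |Ω| ≡ 0 (mod p)`. Hence `p ≤ fix(g) ≤ f`. -/

open MulAction

theorem MulAction.fixedPoints_eq_univ_of_normal {G α : Type*} [Group G] [MulAction G α]
    [IsPretransitive G α] (N : Subgroup G) [N.Normal] {a : α} (ha : a ∈ fixedPoints N α) :
    fixedPoints N α = Set.univ := by
  refine Set.eq_univ_of_forall fun b ↦ ?_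
  obtain ⟨g, rfl⟩ := exists_smul_eq G a b
  exact smul_mem_fixedPoints_of_normal g ha

theorem Subgroup.eq_bot_of_fixedPoints_eq_univ {G α : Type*} [Group G] [MulAction G α]
    [FaithfulSMul G α] (N : Subgroup G) (hN : fixedPoints N α = Set.univ) : N = ⊥ := by
  refine (Subgroup.eq_bot_iff_forall N).2 fun n hn ↦ eq_of_smul_eq_smul (α := α) fun b ↦ ?_
  rw [one_smul]
  exact (hN ▸ Set.mem_univ b : b ∈ fixedPoints N α) ⟨n, hn⟩

theorem IsPGroup.prime_dvd_card_of_isPretransitive {G α : Type*} [Group G] [MulAction G α]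
    [IsPretransitive G α] [FaithfulSMul G α] {p : ℕ} [Fact p.Prime] {N : Subgroup G} [N.Normal]
    (hNp : IsPGroup p N) (hN : N ≠ ⊥) : p ∣ Nat.card α := by
  by_contra hp
  obtain ⟨a, ha⟩ := hNp.nonempty_fixed_point_of_prime_not_dvd_card α hp
  exact hN (N.eq_bot_of_fixedPoints_eq_univ (fixedPoints_eq_univ_of_normal N ha))

theorem IsPGroup.exists_orderOf_eq_prime {G : Type*} [Group G] [Finite G] {p : ℕ} [Fact p.Prime]
    [Nontrivial G] (hG : IsPGroup p G) : ∃ g : G, orderOf g = p := by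
  obtain ⟨k, hk, hcard⟩ := hG.nontrivial_iff_card.1 ‹_›
  exact exists_prime_orderOf_dvd_card' p (hcard ▸ dvd_pow_self p hk.ne')

theorem IsTransitive.isPretransitive {α : Type*} {G : Subgroup (Equiv.Perm α)}
    (hG : IsTransitive G) : IsPretransitive G α :=
  ⟨fun a b ↦ let ⟨g, hg, hgab⟩ := hG a b; ⟨⟨g, hg⟩, hgab⟩⟩

namespace Equiv.Perm

theorem fixedCount_eq_card_compl_support [DecidableEq Ω] (g : Perm Ω) :
    fixedCount g = g.supportᶜ.card := by
  rw [fixedCount, Nat.card_eq_fintype_card, Fintype.card_subtype]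
  congr 1
  ext x
  simp

theorem fixedCount_pos {g : Perm Ω} {x : Ω} (hx : g x = x) : 0 < fixedCount g :=
  have : Nonempty {x : Ω // g x = x} := ⟨⟨x, hx⟩⟩
  Nat.card_pos

theorem prime_dvd_fixedCount {p : ℕ} [Fact p.Prime] {g : Perm Ω} (hg : orderOf g = p)
    (hp : p ∣ Nat.card Ω) : p ∣ fixedCount g := by
  classical
  have hgp : g ^ p ^ 1 = 1 := by rw [pow_one, ← hg, pow_orderOf_eq_one]
  rw [fixedCount_eq_card_compl_support, ← Nat.modEq_zero_iff_dvd]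
  rw [Nat.card_eq_fintype_card] at hp
  exact (card_compl_support_modEq hgp).trans (Nat.modEq_zero_iff_dvd.2 hp)

end Equiv.Perm

/-- an elusive group of fixity `f` with a non-trivial normal
`p`-subgroup satisfies `p ≤ f`. -/
theorem stmt_3 (G : Subgroup (Equiv.Perm Ω)) (f : ℕ) (hel : IsElusive G)
    (hfix : HasFixity G f) (p : ℕ) (hp : p.Prime)
    (N : Subgroup ↥G) (hNnormal : N.Normal) (hNbot : N ≠ ⊥) (hNp : IsPGroup p ↥N) :
    p ≤ f := by
  have : Fact p.Prime := ⟨hp⟩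
  obtain ⟨htrans, hno_derangement⟩ := hel
  have := htrans.isPretransitive
  have hpΩ : p ∣ Nat.card Ω := hNp.prime_dvd_card_of_isPretransitive hNbot
  have := N.nontrivial_iff_ne_bot.2 hNbot
  obtain ⟨n, hn⟩ := hNp.exists_orderOf_eq_prime
  set g : Equiv.Perm Ω := ((n : G) : Equiv.Perm Ω)
  have hg : orderOf g = p := by simp only [g, Subgroup.orderOf_coe, hn]
  have hg1 : g ≠ 1 := fun h ↦ hp.one_lt.ne' (by rw [← hg, h, orderOf_one])
  obtain ⟨x, hx⟩ : ∃ x, g x = x := by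
    by_contra! h
    exact hno_derangement ⟨g, (n : G).2, hg ▸ hp, h⟩
  calc p ≤ fixedCount g := Nat.le_of_dvd (Equiv.Perm.fixedCount_pos hx)
        (Equiv.Perm.prime_dvd_fixedCount hg hpΩ)
    _ ≤ f := hfix.1 g (n : G).2 hg1
end

section
/- Let Ω be a finite set and let G ≤ Sym(Ω) be an elusive permutation group of fixity f ≥ 3. Then every prime divisor of |Ω| is at most f. -/
/-! An element `g` of prime order `p` fixes a number of points congruent to `|Ω|` modulo `p`,
since its non-trivial cycles all have length `p`. If `p ∣ |Ω|`, then `p ∣ |G|` by transitivity,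
so Cauchy's theorem gives such a `g ∈ G`; elusiveness forces `g` to fix a point, hence `g` fixes
a positive multiple of `p` points, and `p ≤ fixedCount g ≤ f`. -/

variable {Ω : Type*} [Fintype Ω]

theorem fixedCount_eq_card_compl_support [DecidableEq Ω] (g : Equiv.Perm Ω) :
    fixedCount g = g.supportᶜ.card := by
  rw [fixedCount, Nat.card_eq_fintype_card, ← Fintype.card_coe]
  exact Fintype.card_congr (Equiv.subtypeEquivRight fun x => by simp)

theorem fixedCount_modEq_card {p : ℕ} [Fact p.Prime] {g : Equiv.Perm Ω} (hg : g ^ p = 1) :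
    fixedCount g ≡ Fintype.card Ω [MOD p] := by
  classical
  rw [fixedCount_eq_card_compl_support]
  exact Equiv.Perm.card_compl_support_modEq (n := 1) (by rwa [pow_one])

theorem prime_le_fixedCount {p : ℕ} (hp : p.Prime) {g : Equiv.Perm Ω} (hg : orderOf g = p)
    (hpΩ : p ∣ Fintype.card Ω) (hfix : ∃ x, g x = x) : p ≤ fixedCount g := by
  have : Fact p.Prime := ⟨hp⟩
  have hdvd : p ∣ fixedCount g := Nat.modEq_zero_iff_dvd.mp <|
    (fixedCount_modEq_card (hg ▸ pow_orderOf_eq_one g)).trans (Nat.modEq_zero_iff_dvd.mpr hpΩ)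
  obtain ⟨x, hx⟩ := hfix
  have : Nonempty {x : Ω // g x = x} := ⟨⟨x, hx⟩⟩
  exact Nat.le_of_dvd Nat.card_pos hdvd

section PermutationGroup

variable {Ω : Type*} {G : Subgroup (Equiv.Perm Ω)}

theorem IsTransitive.isPretransitive_s5 (hG : IsTransitive G) : MulAction.IsPretransitive G Ω :=
  ⟨fun α β => by
    obtain ⟨g, hg, rfl⟩ := hG α β
    exact ⟨⟨g, hg⟩, rfl⟩⟩

theorem IsElusive.exists_fixedPoint (hG : IsElusive G) {g : Equiv.Perm Ω} (hg : g ∈ G)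
    (hprime : (orderOf g).Prime) : ∃ x, g x = x := by
  by_contra! hfree
  exact hG.2 ⟨g, hg, hprime, hfree⟩

theorem HasFixity.nonempty {f : ℕ} (hG : HasFixity G f) : Nonempty Ω := by
  obtain ⟨g, -, hg1, -⟩ := hG.2
  by_contra! hempty
  exact hg1 (Subsingleton.elim g 1)

end PermutationGroup

theorem IsTransitive.card_dvd_card [Nonempty Ω] {G : Subgroup (Equiv.Perm Ω)}
    (hG : IsTransitive G) : Fintype.card Ω ∣ Nat.card G := by
  have := hG.isPretransitive_s5
  obtain ⟨α⟩ := ‹Nonempty Ω›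
  rw [← Nat.card_eq_fintype_card, ← MulAction.index_stabilizer_of_transitive G α]
  exact (MulAction.stabilizer G α).index_dvd_card

theorem stmt_5_general (G : Subgroup (Equiv.Perm Ω)) (f : ℕ) (hel : IsElusive G)
    (hfix : HasFixity G f) :
    ∀ p : ℕ, p.Prime → p ∣ Fintype.card Ω → p ≤ f := by
  intro p hp hpΩ
  have : Fact p.Prime := ⟨hp⟩
  have := hfix.nonempty
  obtain ⟨g, hg⟩ := exists_prime_orderOf_dvd_card' (G := G) p (hpΩ.trans hel.1.card_dvd_card)
  have hord : orderOf (g : Equiv.Perm Ω) = p := by rw [Subgroup.orderOf_coe, hg]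
  have hne : (g : Equiv.Perm Ω) ≠ 1 := fun h => hp.ne_one (by rw [← hord, h, orderOf_one])
  calc p ≤ fixedCount (g : Equiv.Perm Ω) :=
        prime_le_fixedCount hp hord hpΩ (hel.exists_fixedPoint g.2 (hord ▸ hp))
    _ ≤ f := hfix.1 g g.2 hne

/-- for an elusive group of fixity `f ≥ 3`, every prime divisor of
`|Ω|` is at most `f`. -/
theorem stmt_5 (G : Subgroup (Equiv.Perm Ω)) (f : ℕ) (hel : IsElusive G)
    (hfix : HasFixity G f) (hf : 3 ≤ f) :
    ∀ p : ℕ, p.Prime → p ∣ Fintype.card Ω → p ≤ f :=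
  stmt_5_general G f hel hfix
end

section
/- Let Ω be a finite set and let G ≤ Sym(Ω) be an elusive permutation group of fixity f such that |G| is odd. Then f ≥ 5. -/
/-!
For a prime `q ∣ |Ω|`, let `P` be a Sylow `q`-subgroup of `G` and `z` a central element of `P`
of order `q`. Since `G` is elusive, `z` fixes some point `x`. The fixed-point set of `z` is
`P`-invariant, so it contains the `P`-orbit of `x`, and the size of that orbit is divisible by the
`q`-part of `|Ω| = |G : G_x|`. Hence the `q`-part of `|Ω|` is at most `fix(z) ≤ f`, and it is less
than `|Ω|` because `z ≠ 1`. If `f ≤ 4` and `|G|` is odd, the first bound forces `q = 3`, so `|Ω|`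
is a power of `3`, which contradicts the second bound.
-/

variable {Ω : Type*} [Fintype Ω]

open MulAction

section SylowOrbit

variable {G X : Type*} [Group G] [Finite G] {p : ℕ} [Fact p.Prime]

theorem Subgroup.factorization_index_add_factorization_card {H : Type*} [Group H] [Finite H]
    (K : Subgroup H) (p : ℕ) :
    K.index.factorization p + (Nat.card K).factorization p = (Nat.card H).factorization p := by
  rw [← Finsupp.add_apply, ← Nat.factorization_mul K.index_ne_zero_of_finite Nat.card_pos.ne',
    K.index_mul_card]

theorem Sylow.exists_mem_center_orderOf_eq (P : Sylow p G) (hp : p ∣ Nat.card G) :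
    ∃ z ∈ Subgroup.center P, orderOf z = p := by
  have : Nontrivial P := (Subgroup.nontrivial_iff_ne_bot _).mpr (P.ne_bot_of_dvd_card hp)
  have := P.isPGroup'.center_nontrivial
  have hcenter : p ∣ Nat.card (Subgroup.center P) :=
    ((P.isPGroup'.to_subgroup _).card_eq_or_dvd).resolve_left Finite.one_lt_card.ne'
  obtain ⟨z, hz⟩ := exists_prime_orderOf_dvd_card' p hcenter
  exact ⟨z, z.2, by rw [Subgroup.orderOf_coe, hz]⟩

variable [MulAction G X]

theorem Sylow.pow_factorization_card_orbit_dvd (P : Sylow p G) (x : X) :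
    p ^ (Nat.card (orbit G x)).factorization p ∣ Nat.card (orbit P x) := by
  have hp : p.Prime := Fact.out
  rw [Nat.card_coe_set_eq, Nat.card_coe_set_eq, ← index_stabilizer, ← index_stabilizer]
  have hGx := (stabilizer G x).factorization_index_add_factorization_card p
  have hPx := (stabilizer P x).factorization_index_add_factorization_card p
  rw [P.card_eq_multiplicity, Nat.factorization_pow, Finsupp.smul_apply, hp.factorization_self,
    smul_eq_mul, mul_one] at hPx
  have hstab : Nat.card (stabilizer P x) ∣ Nat.card (stabilizer G x) :=
    Subgroup.card_comap_dvd_of_injective _ (P : Subgroup G).subtype Subtype.val_injective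
  have := (Nat.factorization_le_iff_dvd Nat.card_pos.ne' Nat.card_pos.ne').mpr hstab p
  exact (hp.pow_dvd_iff_le_factorization Subgroup.index_ne_zero_of_finite).mpr (by omega)

theorem Sylow.pow_factorization_card_orbit_le_card_fixedBy [Finite X] (P : Sylow p G)
    {z : P} (hz : z ∈ Subgroup.center P) {x : X} (hx : x ∈ fixedBy X z) :
    p ^ (Nat.card (orbit G x)).factorization p ≤ Nat.card (fixedBy X z) := by
  have horbit : orbit P x ⊆ fixedBy X z := by
    rintro _ ⟨g, rfl⟩
    exact (smul_mem_of_set_mem_fixedBy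
      (fixedBy_mem_fixedBy_of_commute (Subgroup.mem_center_iff.mp hz g).symm)).mpr hx
  have : Nonempty (orbit P x) := ⟨⟨x, mem_orbit_self x⟩⟩
  calc p ^ (Nat.card (orbit G x)).factorization p ≤ Nat.card (orbit P x) :=
        Nat.le_of_dvd Nat.card_pos (P.pow_factorization_card_orbit_dvd x)
    _ ≤ Nat.card (fixedBy X z) := Nat.card_mono (Set.toFinite _) horbit

end SylowOrbit

theorem fixedCount_lt_card {g : Equiv.Perm Ω} (hg : g ≠ 1) : fixedCount g < Fintype.card Ω := by
  obtain ⟨x, hx⟩ : ∃ x, g x ≠ x := by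
    by_contra! h
    exact hg (Equiv.ext h)
  exact Nat.card_eq_fintype_card (α := Ω) ▸ Finite.card_subtype_lt hx

theorem IsElusive.exists_orderOf_eq_pow_factorization_le_fixedCount [Nonempty Ω]
    {G : Subgroup (Equiv.Perm Ω)} (hG : IsElusive G) {q : ℕ} (hq : q.Prime)
    (hqn : q ∣ Fintype.card Ω) :
    ∃ g ∈ G, orderOf g = q ∧ q ^ (Fintype.card Ω).factorization q ≤ fixedCount g := by
  have : Fact q.Prime := ⟨hq⟩
  have : IsPretransitive G Ω := ⟨fun a b => by
    obtain ⟨g, hg, hgab⟩ := hG.1 a b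
    exact ⟨⟨g, hg⟩, hgab⟩⟩
  have hqG : q ∣ Nat.card G := by
    refine hqn.trans ?_
    rw [← Nat.card_eq_fintype_card, ← index_stabilizer_of_transitive G (Classical.arbitrary Ω)]
    exact Subgroup.index_dvd_card _
  obtain ⟨P⟩ : Nonempty (Sylow q G) := inferInstance
  obtain ⟨z, hz, hzq⟩ := P.exists_mem_center_orderOf_eq hqG
  have hzq_perm : orderOf ((z : G) : Equiv.Perm Ω) = q := by
    rw [Subgroup.orderOf_coe, Subgroup.orderOf_coe, hzq]
  obtain ⟨x, hx⟩ : ∃ x, ((z : G) : Equiv.Perm Ω) x = x := by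
    by_contra! h
    exact hG.2 ⟨_, (z : G).2, by rwa [hzq_perm], h⟩
  refine ⟨_, (z : G).2, hzq_perm, ?_⟩
  have := P.pow_factorization_card_orbit_le_card_fixedBy hz (x := x) hx
  rwa [orbit_eq_univ, Nat.card_univ, Nat.card_eq_fintype_card] at this

theorem IsElusive.eq_three_of_prime_dvd_card [Nonempty Ω] {G : Subgroup (Equiv.Perm Ω)}
    (hG : IsElusive G) (hodd : Odd (Nat.card G))
    (hbound : ∀ g ∈ G, g ≠ 1 → fixedCount g ≤ 4) {q : ℕ} (hq : q.Prime)
    (hqn : q ∣ Fintype.card Ω) : q = 3 := by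
  obtain ⟨g, hg, hgq, hle⟩ := hG.exists_orderOf_eq_pow_factorization_le_fixedCount hq hqn
  have hg1 : g ≠ 1 := by
    rintro rfl
    exact hq.ne_one (orderOf_one.symm.trans hgq).symm
  have hqq : q ≤ q ^ (Fintype.card Ω).factorization q :=
    Nat.le_self_pow (hq.factorization_pos_of_dvd Fintype.card_ne_zero hqn).ne' q
  have hqG : q ∣ Nat.card G := by
    rw [← hgq, ← Subgroup.orderOf_mk g hg]
    exact orderOf_dvd_natCard _
  obtain ⟨m, rfl⟩ := hodd.of_dvd_nat hqG
  have := hbound g hg hg1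
  have := hq.two_le
  omega

/-- an elusive group of fixity `f` of odd order satisfies `f ≥ 5`. -/
theorem stmt_8 (G : Subgroup (Equiv.Perm Ω)) (f : ℕ) (hodd : Odd (Nat.card ↥G))
    (hel : IsElusive G) (hfix : HasFixity G f) :
    5 ≤ f := by
  by_contra! hf
  obtain ⟨hbound, g₀, -, hg₀, -⟩ := hfix
  have : Nontrivial Ω := by
    by_contra h
    rw [not_nontrivial_iff_subsingleton] at h
    exact hg₀ (Subsingleton.elim _ _)
  obtain ⟨L, hL⟩ : ∃ L, Fintype.card Ω = 3 ^ L :=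
    ⟨_, Nat.eq_prime_pow_of_unique_prime_dvd Fintype.card_ne_zero
      (hel.eq_three_of_prime_dvd_card hodd fun g hg hg1 => by linarith [hbound g hg hg1])⟩
  have h3 : 3 ∣ Fintype.card Ω := by
    refine hL ▸ dvd_pow_self 3 ?_
    rintro rfl
    exact Fintype.one_lt_card.ne' hL
  obtain ⟨g, -, hgq, hle⟩ := hel.exists_orderOf_eq_pow_factorization_le_fixedCount
    Nat.prime_three h3
  have hlt := fixedCount_lt_card (g := g) (by rintro rfl; simp at hgq)
  rw [hL] at hlt
  rw [hL, Nat.prime_three.factorization_pow, Finsupp.single_eq_same] at hle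
  exact hle.not_gt hlt
end

section
/- Let Ω be a finite set, let G ≤ Sym(Ω) be an elusive permutation group of fixity f, and let N be a non-trivial abelian normal subgroup of G with smallest prime divisor p of |N|. Then |Ω| · (p − 1) ≤ f · (p·f − 1), and consequently |Ω| ≤ f · (2f − 1). -/
/-!
Let `N` act on `Ω` through `G`. Elusivity gives a non-trivial element of `N` with a fixed point
`y`; as `N` is normal and `G` transitive, all point stabilisers `N_x` have the same order `q`, and
`q ≥ p` because `N_y` is a non-trivial subgroup of `N`. Counting pairs `(n, x)` with `n • x = x`
gives `|Ω| (q - 1) ≤ (|N| - 1) f`. Since `N` is abelian, a non-trivial element of `N_y` fixes the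
whole `N`-orbit of `y`, so that orbit has length `t ≤ f`, and `|N| = q t`. Hence
`|Ω| ≤ f (q t - 1) / (q - 1) = f (t + (t - 1) / (q - 1)) ≤ f (p f - 1) / (p - 1)`, and the last
quotient is at most `2 f - 1` for `p ≥ 2`.
-/

variable {Ω : Type*} [Fintype Ω]

open MulAction

namespace MulAction

variable {G X : Type*} [Group G] [MulAction G X]

theorem sum_card_fixedBy_eq_sum_card_stabilizer [Fintype G] [Fintype X] :
    ∑ g : G, Nat.card (fixedBy X g) = ∑ x : X, Nat.card (stabilizer G x) := by
  classical
  simp only [Nat.card_eq_fintype_card, Fintype.card_subtype, Finset.card_filter,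
    mem_fixedBy, mem_stabilizer_iff]
  exact Finset.sum_comm

theorem card_mul_le_card_add_of_card_fixedBy_le [Finite G] [Finite X] {f q : ℕ}
    (hfix : ∀ g : G, g ≠ 1 → Nat.card (fixedBy X g) ≤ f)
    (hstab : ∀ x : X, Nat.card (stabilizer G x) = q) :
    Nat.card X * q ≤ Nat.card X + (Nat.card G - 1) * f := by
  classical
  have := Fintype.ofFinite G
  have := Fintype.ofFinite X
  calc Nat.card X * q = ∑ _x : X, q := by simp [Nat.card_eq_fintype_card]
    _ = ∑ x : X, Nat.card (stabilizer G x) := by simp only [hstab]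
    _ = ∑ g : G, Nat.card (fixedBy X g) := sum_card_fixedBy_eq_sum_card_stabilizer.symm
    _ = Nat.card X + ∑ g ∈ Finset.univ.erase (1 : G), Nat.card (fixedBy X g) := by
        rw [← Finset.add_sum_erase _ _ (Finset.mem_univ 1), fixedBy_one_eq_univ, Nat.card_univ]
    _ ≤ Nat.card X + ∑ _g ∈ Finset.univ.erase (1 : G), f := by
        gcongr with g hg
        exact hfix g (Finset.ne_of_mem_erase hg)
    _ = Nat.card X + (Nat.card G - 1) * f := by
        simp [Nat.card_eq_fintype_card]

theorem orbit_subset_fixedBy_of_mem_stabilizer {g : G} (hg : ∀ h : G, Commute g h) {x : X}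
    (hx : g ∈ stabilizer G x) : orbit G x ⊆ fixedBy X g := by
  rintro _ ⟨h, rfl⟩
  rw [mem_fixedBy, smul_smul, (hg h).eq, mul_smul, mem_stabilizer_iff.1 hx]

end MulAction

namespace Subgroup.Normal

variable {G X : Type*} [Group G] [MulAction G X] {N : Subgroup G}

theorem card_stabilizer_smul (hN : N.Normal) (g : G) (x : X) :
    Nat.card (stabilizer N (g • x)) = Nat.card (stabilizer N x) := by
  have := hN
  exact (Nat.card_congr <| (MulAut.conjNormal g).toEquiv.subtypeEquiv fun n => by
    simp [mem_stabilizer_iff, Subgroup.smul_def, MulAut.conjNormal_apply, mul_smul]).symm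

theorem card_stabilizer_eq [IsPretransitive G X] (hN : N.Normal) (x y : X) :
    Nat.card (stabilizer N x) = Nat.card (stabilizer N y) := by
  obtain ⟨g, rfl⟩ := MulAction.exists_smul_eq G y x
  exact hN.card_stabilizer_smul g y

end Subgroup.Normal

theorem mul_sub_one_le_of_mul_le_add {n p q t f : ℕ} (hp : 2 ≤ p) (hpq : p ≤ q) (ht : 1 ≤ t)
    (htf : t ≤ f) (h : n * q ≤ n + (q * t - 1) * f) : n * (p - 1) ≤ f * (p * f - 1) := by
  have h1 : 1 ≤ q * t := Nat.one_le_iff_ne_zero.2 (Nat.mul_ne_zero (by omega) (by omega))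
  have h2 : 1 ≤ p * f := Nat.one_le_iff_ne_zero.2 (Nat.mul_ne_zero (by omega) (by omega))
  zify [h1, h2, show 1 ≤ p by omega] at h ⊢
  have hratio : ((p : ℤ) - 1) * (q * t - 1) ≤ (p * f - 1) * (q - 1) := by
    nlinarith [mul_nonneg (mul_nonneg (by omega : (0 : ℤ) ≤ q - 1) (by omega : (0 : ℤ) ≤ f - t))
      (by omega : (0 : ℤ) ≤ p), mul_nonneg (by omega : (0 : ℤ) ≤ q - p) (by omega : (0 : ℤ) ≤ t - 1)]
  refine le_of_mul_le_mul_right ?_ (by omega : (0 : ℤ) < q - 1)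
  nlinarith [mul_le_mul_of_nonneg_right (by linarith : (n : ℤ) * (q - 1) ≤ (q * t - 1) * f)
    (by omega : (0 : ℤ) ≤ p - 1), mul_le_mul_of_nonneg_left hratio (by omega : (0 : ℤ) ≤ f)]

theorem le_mul_two_mul_sub_one {n p f : ℕ} (hp : 2 ≤ p) (h : n * (p - 1) ≤ f * (p * f - 1)) :
    n ≤ f * (2 * f - 1) := by
  rcases Nat.eq_zero_or_pos f with rfl | hf
  · simpa [show p - 1 ≠ 0 by omega] using h
  have h1 : 1 ≤ p * f := Nat.one_le_iff_ne_zero.2 (Nat.mul_ne_zero (by omega) (by omega))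
  zify [h1, show 1 ≤ 2 * f by omega, show 1 ≤ p by omega] at h ⊢
  refine le_of_mul_le_mul_right ?_ (by omega : (0 : ℤ) < p - 1)
  nlinarith [mul_nonneg (by omega : (0 : ℤ) ≤ f - 1) (by omega : (0 : ℤ) ≤ p - 2)]

open Equiv

theorem IsTransitive.isPretransitive_s12 {X : Type*} {G : Subgroup (Perm X)} (hG : IsTransitive G) :
    IsPretransitive G X where
  exists_smul_eq x y := by
    obtain ⟨g, hg, hgxy⟩ := hG x y
    exact ⟨⟨g, hg⟩, hgxy⟩

theorem HasFixity.card_fixedBy_le {X : Type*} {G : Subgroup (Perm X)} {f : ℕ}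
    (hG : HasFixity G f) {N : Subgroup G} {n : N} (hn : n ≠ 1) : Nat.card (fixedBy X n) ≤ f :=
  hG.1 _ (n : G).2 (by simpa using hn)

theorem IsElusive.exists_stabilizer_ne_bot {G : Subgroup (Perm Ω)} (hG : IsElusive G)
    {N : Subgroup G} (hN : N ≠ ⊥) : ∃ x : Ω, stabilizer N x ≠ ⊥ := by
  have hp : (Nat.card N).minFac.Prime :=
    Nat.minFac_prime ((Subgroup.one_lt_card_iff_ne_bot N).2 hN).ne'
  have := Fact.mk hp
  obtain ⟨a, ha⟩ := exists_prime_orderOf_dvd_card' _ (Nat.minFac_dvd (Nat.card N))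
  by_contra! hfree
  refine hG.2 ⟨a, (a : G).2, by simpa [Subgroup.orderOf_coe, ha] using hp, fun x hx => ?_⟩
  have : a = 1 := by simpa [hfree x] using (show a ∈ stabilizer N x from hx)
  simp [this] at ha
  exact hp.ne_one ha.symm

/-- for an elusive group `G` of fixity `f` and a non-trivial abelian
normal subgroup `N` with smallest prime divisor `p` of `|N|`, one has
`|Ω| * (p - 1) ≤ f * (p * f - 1)`, and consequently `|Ω| ≤ f * (2 * f - 1)`. -/
theorem stmt_12 (G : Subgroup (Equiv.Perm Ω)) (f : ℕ) (hel : IsElusive G)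
    (hfix : HasFixity G f) (N : Subgroup ↥G) (hNnormal : N.Normal) (hNbot : N ≠ ⊥)
    (hNab : ∀ a b : ↥N, a * b = b * a) (p : ℕ) (hp : p = (Nat.card ↥N).minFac) :
    Fintype.card Ω * (p - 1) ≤ f * (p * f - 1) ∧
      Fintype.card Ω ≤ f * (2 * f - 1) := by
  have := hel.1.isPretransitive_s12
  obtain ⟨y, hy⟩ := hel.exists_stabilizer_ne_bot hNbot
  obtain ⟨⟨a, ha⟩, ha1⟩ := Subgroup.ne_bot_iff_exists_ne_one.1 hy
  have hp2 : 2 ≤ p :=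
    hp ▸ (Nat.minFac_prime ((Subgroup.one_lt_card_iff_ne_bot N).2 hNbot).ne').two_le
  have hpq : p ≤ Nat.card (stabilizer N y) :=
    hp ▸ Nat.minFac_le_of_dvd ((Subgroup.one_lt_card_iff_ne_bot _).2 hy)
      (Subgroup.card_subgroup_dvd_card _)
  have horbit_pos : 1 ≤ Nat.card (orbit N y) :=
    Nat.card_pos_iff.2 ⟨⟨y, mem_orbit_self y⟩, inferInstance⟩
  have horbit_le : Nat.card (orbit N y) ≤ f :=
    (Nat.card_mono (Set.toFinite _)
      (orbit_subset_fixedBy_of_mem_stabilizer (fun b => hNab a b) ha)).trans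
      (hfix.card_fixedBy_le fun h => ha1 (Subtype.ext h))
  have hcard : Nat.card N = Nat.card (stabilizer N y) * Nat.card (orbit N y) := by
    rw [← Subgroup.card_mul_index, index_stabilizer N y, Nat.card_coe_set_eq]
  have hcount := card_mul_le_card_add_of_card_fixedBy_le (G := N) (X := Ω)
    (fun n hn => hfix.card_fixedBy_le hn) (fun x => hNnormal.card_stabilizer_eq x y)
  rw [hcard] at hcount
  have hbound := mul_sub_one_le_of_mul_le_add hp2 hpq horbit_pos horbit_le hcount
  rw [Fintype.card_eq_nat_card]
  exact ⟨hbound, le_mul_two_mul_sub_one hp2 hbound⟩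
end

section
/- Let Ω be a finite set, let G ≤ Sym(Ω) be an elusive permutation group of fixity 3, and let N be a non-trivial abelian normal subgroup of G. Then N is isomorphic either to ℤ₂ × ℤ₂ or to ℤ₃ × ℤ₃. -/
/-!
The orbits of `N` all have the same size `p`, because `G` is transitive and permutes them.
As `N` is abelian, an element of `N` fixing a point fixes its whole `N`-orbit, and `N` acts on
each orbit through a group of order `p`, so `N` has exponent dividing `p`. Elusivity gives every
element of prime order a fixed point, hence `p` fixed points, so `p ≤ 3`; thus `p ∈ {2, 3}` is
prime and every non-trivial element of `N` fixes exactly one orbit. Burnside's lemma then reads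
`k p + (|N| - 1) p = k |N|` with `k` the number of orbits, and writing `|N| = p s` with `s` the
order of a point stabiliser, which is a non-trivial `p`-group, this forces `s = p`. So `N` is
elementary abelian of order `p²`.
-/

variable {Ω : Type*} [Fintype Ω]

open MulAction

lemma nonempty_mulEquiv_zmod_prod_of_pow_eq_one {H : Type*} [CommGroup H] [Finite H]
    {p : ℕ} [Fact p.Prime] (hexp : ∀ x : H, x ^ p = 1) (hcard : Nat.card H = p ^ 2) :
    Nonempty (H ≃* Multiplicative (ZMod p) × Multiplicative (ZMod p)) := by
  let _ : Module (ZMod p) (Additive H) := AddCommGroup.zmodModule (n := p) fun x => hexp x.toMul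
  have : Module.Finite (ZMod p) (Additive H) := Module.Finite.of_finite
  have : Fintype (Additive H) := Fintype.ofFinite _
  have hrank : Module.finrank (ZMod p) (Additive H) = 2 := by
    have hcard' := Module.card_eq_pow_finrank (K := ZMod p) (V := Additive H)
    rw [ZMod.card, ← Nat.card_eq_fintype_card] at hcard'
    exact Nat.pow_right_injective (Fact.out : p.Prime).two_le (hcard'.symm.trans hcard)
  let e := (Module.finBasisOfFinrankEq (ZMod p) (Additive H) hrank).equivFun.trans
    (LinearEquiv.finTwoArrow (ZMod p) (ZMod p))
  exact ⟨(AddEquiv.toMultiplicativeRight e.toAddEquiv).trans (MulEquiv.prodMultiplicative _ _)⟩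

lemma le_of_add_mul_eq_mul_add_one {k p s : ℕ} (hp : 2 ≤ p) (h : k + p * s = k * s + 1) :
    s ≤ p := by
  by_contra! hps
  rcases le_or_gt k p with hk | hk <;> nlinarith

namespace MulAction

section Counting

variable {A α : Type*} [Group A] [MulAction A α]

lemma ncard_orbit_eq_of_normal [IsPretransitive A α] (N : Subgroup A) [N.Normal] (x y : α) :
    (orbit N x).ncard = (orbit N y).ncard := by
  obtain ⟨g, rfl⟩ := exists_smul_eq A x y
  rw [← smul_orbit_eq_orbit_smul, Set.ncard_smul_set]

lemma card_eq_card_orbitRel_quotient_mul [Finite α] {p : ℕ}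
    (horb : ∀ x : α, (orbit A x).ncard = p) :
    Nat.card α = Nat.card (orbitRel.Quotient A α) * p := by
  have := Fintype.ofFinite (orbitRel.Quotient A α)
  rw [Nat.card_congr (selfEquivSigmaOrbits A α), Nat.card_sigma]
  simp [Nat.card_coe_set_eq, horb, Nat.card_eq_fintype_card]

lemma sum_ncard_fixedBy_eq_card_orbitRel_quotient_mul [Fintype A] [Finite α] :
    ∑ a : A, (fixedBy α a).ncard = Nat.card (orbitRel.Quotient A α) * Nat.card A := by
  classical
  have := Fintype.ofFinite α
  have := Fintype.ofFinite (orbitRel.Quotient A α)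
  simp only [← Nat.card_coe_set_eq, Nat.card_eq_fintype_card]
  exact sum_card_fixedBy_eq_card_orbits_mul_card_group A α

end Counting

section Abelian

variable {A α : Type*} [Group A] [IsMulCommutative A] [MulAction A α]

lemma orbit_subset_fixedBy {a : A} {x : α} (hx : x ∈ fixedBy α a) :
    orbit A x ⊆ fixedBy α a := by
  rintro _ ⟨b, rfl⟩
  rw [mem_fixedBy, smul_smul, mul_comm' a b, mul_smul, mem_fixedBy.mp hx]

lemma pow_ncard_orbit_smul (a : A) (x : α) : a ^ (orbit A x).ncard • x = x := by
  have := Subgroup.normal_of_isMulCommutative (stabilizer A x)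
  rw [← index_stabilizer, ← mem_stabilizer_iff, ← QuotientGroup.eq_one_iff, QuotientGroup.mk_pow]
  exact pow_card_eq_one'

lemma pow_eq_one_of_forall_ncard_orbit_eq [FaithfulSMul A α] {p : ℕ}
    (horb : ∀ x : α, (orbit A x).ncard = p) (a : A) : a ^ p = 1 :=
  eq_of_smul_eq_smul fun x => by rw [one_smul, ← horb x, pow_ncard_orbit_smul]

lemma fixedBy_eq_orbit_of_ncard_lt [Finite α] {p : ℕ} (horb : ∀ x : α, (orbit A x).ncard = p)
    {a : A} {x : α} (hx : x ∈ fixedBy α a) (hlt : (fixedBy α a).ncard < 2 * p) :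
    fixedBy α a = orbit A x := by
  refine Set.Subset.antisymm (fun y hy => ?_) (orbit_subset_fixedBy hx)
  rcases orbit.eq_or_disjoint (G := A) x y with hxy | hdisj
  · exact hxy ▸ mem_orbit_self y
  · have hle := Set.ncard_le_ncard
      (Set.union_subset (orbit_subset_fixedBy hx) (orbit_subset_fixedBy hy)) (Set.toFinite _)
    rw [Set.ncard_union_eq hdisj, horb, horb] at hle
    omega

theorem card_eq_sq_of_ncard_fixedBy_eq [Finite A] [Finite α] [FaithfulSMul A α] {p : ℕ}
    (hp : p.Prime) (horb : ∀ x : α, (orbit A x).ncard = p)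
    (hfix : ∀ b : A, b ≠ 1 → (fixedBy α b).ncard = p) {a : A} (ha : a ≠ 1) :
    Nat.card A = p ^ 2 := by
  classical
  have := Fact.mk hp
  have := Fintype.ofFinite A
  obtain ⟨y, hy⟩ : (fixedBy α a).Nonempty :=
    Set.nonempty_of_ncard_ne_zero (by rw [hfix a ha]; exact hp.ne_zero)
  set s := Nat.card (stabilizer A y)
  have hcard : Nat.card A = p * s := by
    rw [← Subgroup.index_mul_card (stabilizer A y), index_stabilizer, horb]
  have hs : 2 ≤ s := (Subgroup.one_lt_card_iff_ne_bot _).mpr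
    ((Subgroup.ne_bot_iff_exists_ne_one).mpr ⟨⟨a, hy⟩, mt (congrArg Subtype.val) ha⟩)
  have hps : p ∣ s := by
    rw [← orderOf_eq_prime (pow_eq_one_of_forall_ncard_orbit_eq horb a) ha]
    exact Subgroup.orderOf_dvd_natCard _ hy
  -- Burnside: the identity fixes all `k p` points, each of the other `p s - 1` elements `p`.
  have hburnside := sum_ncard_fixedBy_eq_card_orbitRel_quotient_mul (A := A) (α := α)
  rw [← Finset.add_sum_erase _ _ (Finset.mem_univ 1),
    Finset.sum_congr rfl fun b hb => hfix b (Finset.ne_of_mem_erase hb), Finset.sum_const,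
    Finset.card_erase_of_mem (Finset.mem_univ 1), Finset.card_univ, ← Nat.card_eq_fintype_card,
    fixedBy_one_eq_univ, Set.ncard_univ, card_eq_card_orbitRel_quotient_mul horb, hcard,
    smul_eq_mul] at hburnside
  have hsp : s ≤ p := by
    refine le_of_add_mul_eq_mul_add_one (k := Nat.card (orbitRel.Quotient A α)) hp.two_le
      (Nat.eq_of_mul_eq_mul_left hp.pos ?_)
    have : 1 ≤ p * s := Nat.mul_pos hp.pos (by omega)
    zify [this] at hburnside ⊢
    linear_combination hburnside
  rw [hcard, le_antisymm hsp (Nat.le_of_dvd (by omega) hps), sq]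

open scoped IsMulCommutative in
theorem nonempty_mulEquiv_zmod_two_or_three [Finite A] [Finite α] [FaithfulSMul A α]
    [Nontrivial A] (horb : ∀ x y : α, (orbit A x).ncard = (orbit A y).ncard)
    (hprime : ∀ a : A, (orderOf a).Prime → (fixedBy α a).Nonempty)
    (hfix : ∀ a : A, a ≠ 1 → (fixedBy α a).ncard ≤ 3) :
    Nonempty (A ≃* Multiplicative (ZMod 2) × Multiplicative (ZMod 2)) ∨
      Nonempty (A ≃* Multiplicative (ZMod 3) × Multiplicative (ZMod 3)) := by
  have hq := Nat.minFac_prime (Finite.one_lt_card (α := A)).ne'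
  have := Fact.mk hq
  obtain ⟨a, ha⟩ := exists_prime_orderOf_dvd_card' _ (Nat.minFac_dvd (Nat.card A))
  have ha1 : a ≠ 1 := fun h => hq.ne_one (by rw [← ha, h, orderOf_one])
  obtain ⟨x₀, hx₀⟩ := hprime a (ha ▸ hq)
  obtain ⟨p, horb'⟩ : ∃ p, ∀ x : α, (orbit A x).ncard = p := ⟨_, fun x => horb x x₀⟩
  have hexp := pow_eq_one_of_forall_ncard_orbit_eq horb'
  have hp3 : p ≤ 3 :=
    horb' x₀ ▸ (Set.ncard_le_ncard (orbit_subset_fixedBy hx₀) (Set.toFinite _)).trans (hfix a ha1)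
  have hp0 : p ≠ 0 := horb' x₀ ▸ ((Set.ncard_pos (Set.toFinite _)).mpr (nonempty_orbit x₀)).ne'
  have hp1 : p ≠ 1 := fun h => ha1 (by simpa [h] using hexp a)
  have hp23 : p = 2 ∨ p = 3 := by omega
  have hp : p.Prime := by rcases hp23 with rfl | rfl <;> norm_num
  have := Fact.mk hp
  have hfixp : ∀ b : A, b ≠ 1 → (fixedBy α b).ncard = p := by
    intro b hb
    obtain ⟨x, hx⟩ := hprime b ((orderOf_eq_prime (hexp b) hb).symm ▸ hp)
    have := hp.two_le
    rw [fixedBy_eq_orbit_of_ncard_lt horb' hx (by have := hfix b hb; omega), horb']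
  have hcard := card_eq_sq_of_ncard_fixedBy_eq hp horb' hfixp ha1
  rcases hp23 with rfl | rfl
  · exact .inl (nonempty_mulEquiv_zmod_prod_of_pow_eq_one hexp hcard)
  · exact .inr (nonempty_mulEquiv_zmod_prod_of_pow_eq_one hexp hcard)

end Abelian

end MulAction

section PermutationGroup

variable {X : Type*} {G : Subgroup (Equiv.Perm X)}

lemma IsTransitive.isPretransitive_s16 (h : IsTransitive G) : IsPretransitive G X :=
  ⟨fun x y => let ⟨g, hg, hgx⟩ := h x y; ⟨⟨g, hg⟩, hgx⟩⟩

lemma IsElusive.fixedBy_nonempty (h : IsElusive G) {g : G} (hg : (orderOf g).Prime) :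
    (fixedBy X g).Nonempty := by
  by_contra hfree
  exact h.2 ⟨g, g.2, by rwa [Subgroup.orderOf_coe], fun x hx => hfree ⟨x, hx⟩⟩

lemma HasFixity.ncard_fixedBy_le {f : ℕ} (h : HasFixity G f) {g : G} (hg : g ≠ 1) :
    (fixedBy X g).ncard ≤ f :=
  (Nat.card_coe_set_eq _).symm.trans_le (h.1 g g.2 (by simpa using hg))

end PermutationGroup

/-- a non-trivial abelian normal subgroup of an elusive group of
fixity `3` is isomorphic to `ℤ₂ × ℤ₂` or to `ℤ₃ × ℤ₃`. -/
theorem stmt_16 (G : Subgroup (Equiv.Perm Ω)) (hel : IsElusive G)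
    (hfix : HasFixity G 3) (N : Subgroup ↥G) (hNnormal : N.Normal) (hNbot : N ≠ ⊥)
    (hNab : ∀ a b : ↥N, a * b = b * a) :
    Nonempty (↥N ≃* (Multiplicative (ZMod 2) × Multiplicative (ZMod 2))) ∨
      Nonempty (↥N ≃* (Multiplicative (ZMod 3) × Multiplicative (ZMod 3))) := by
  have : IsMulCommutative N := IsMulCommutative.of_comm hNab
  have : Nontrivial N := (Subgroup.nontrivial_iff_ne_bot N).mpr hNbot
  have : IsPretransitive G Ω := hel.1.isPretransitive_s16
  refine nonempty_mulEquiv_zmod_two_or_three (ncard_orbit_eq_of_normal N)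
    (fun a ha => hel.fixedBy_nonempty (g := a) ?_) (fun a ha => hfix.ncard_fixedBy_le (g := a) ?_)
  · rwa [Subgroup.orderOf_coe]
  · simpa using ha
end
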